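/- There is no perfect strategy for the coherent embezzlement game in the tensor product framework, even with ancillas: for all types R_A, R_B, G_A, G_B, writing X := Fin 3 × R_A × G_A, Y := Fin 3 × R_B × G_B and K := ℓ²(X × Y), there do NOT exist unit vectors ψ ∈ ℓ²(R_A × R_B), γ_A ∈ ℓ²(G_A), γ_B ∈ ℓ²(G_B), bounded operators P : Fin 2 → (ℓ²(X) →L[ℂ] ℓ²(X)) and Q : Fin 2 → (ℓ²(Y) →L[ℂ] ℓ²(Y)) with each P a and Q b a self-adjoint idempotent, P 0 + P 1 = 1 and Q 0 + Q 1 = 1, and bounded operators P̂ a, Q̂ b on K such that each P̂ a is the amplification of P a to the first factor and each Q̂ b is the amplification of Q b to the second factor, satisfying: for all c, a, b ∈ Fin 2 with a + b ≠ c (mod 2), P̂ a (Q̂ b Φ_c) = 0, where Φ_c ∈ K is the vector with coordinates Φ_c ((i, r_A, g_A), (j, r_B, g_B)) = (α c i j) * ψ (r_A, r_B) * γ_A g_A * γ_B g_B. -/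

import Mathlib

/-- `ℓ²(X)`: the Hilbert space of square-summable families of complex numbers indexed by `X`. -/
noncomputable abbrev l2 (X : Type*) := lp (fun _ : X => ℂ) 2

/-- `W` is the amplification of the bounded operator `T` to the first factor of
`ℓ²(X × Y)`. -/
def IsAmplificationFst {X Y : Type*} (T : l2 X →L[ℂ] l2 X)
    (W : l2 (X × Y) →L[ℂ] l2 (X × Y)) : Prop :=
  ∀ (f : l2 (X × Y)) (g : l2 X) (y : Y),
    (∀ x, g x = f (x, y)) → ∀ x, (W f) (x, y) = (T g) x

/-- `W` is the amplification of the bounded operator `T` to the second factor of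
`ℓ²(X × Y)`. -/
def IsAmplificationSnd {X Y : Type*} (T : l2 Y →L[ℂ] l2 Y)
    (W : l2 (X × Y) →L[ℂ] l2 (X × Y)) : Prop :=
  ∀ (f : l2 (X × Y)) (g : l2 Y) (x : X),
    (∀ y, g y = f (x, y)) → ∀ y, (W f) (x, y) = (T g) y

/-- The coefficients of the two input states `φ_c` of the Regev–Vidick coherent
embezzlement game: `α c 0 0 = 1/√2`, `α c 1 1 = α c 2 2 = (-1)^c / 2`, and `0` otherwise. -/
noncomputable def gameCoeff (c : Fin 2) (i j : Fin 3) : ℂ :=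
  if i = 0 ∧ j = 0 then 1 / Real.sqrt 2
  else if i = j then (-1) ^ (c : ℕ) / 2
  else 0

/-!
The purity `Tr ρ²` of the reduced state of a bipartite vector is the same on both factors
(the two reduced operators have the same nonzero spectrum), so it is unchanged by a unitary
acting on either factor alone. A perfect strategy makes the product of the local reflections
`P₀ - P₁` and `Q₀ - Q₁` map `φ₀ + φ₁ = √2 |00⟩ ⊗ η` to `φ₀ - φ₁ = (|11⟩ + |22⟩) ⊗ η`, where
`η = ψ ⊗ γ_A ⊗ γ_B`. But the purities of these two vectors are `4 p` and `2 p`, with `p > 0`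
the purity of `η`.
-/

open scoped InnerProductSpace ComplexConjugate

namespace l2

variable {I J U V U' V' : Type*}

lemma summable_norm_sq (f : l2 I) : Summable fun i => ‖f i‖ ^ 2 := by
  simpa using (lp.memℓp f).summable (p := 2) (by norm_num)

lemma norm_sq_eq_tsum (f : l2 I) : ‖f‖ ^ 2 = ∑' i, ‖f i‖ ^ 2 := by
  simpa using lp.norm_rpow_eq_tsum (p := 2) (by norm_num) f

lemma memℓp_of_summable_norm_sq {f : I → ℂ} (hf : Summable fun i => ‖f i‖ ^ 2) : Memℓp f 2 :=
  memℓp_gen (by simpa using hf)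

lemma inner_eq_tsum (f g : l2 I) : ⟪f, g⟫_ℂ = ∑' i, conj (f i) * g i :=
  (lp.inner_eq_tsum f g).trans (tsum_congr fun i => by simp [mul_comm])

lemma summable_norm_conj_mul (f g : l2 I) : Summable fun i => ‖conj (f i) * g i‖ := by
  refine .of_nonneg_of_le (fun i => by positivity) (fun i => ?_)
    (((summable_norm_sq f).add (summable_norm_sq g)).div_const 2)
  rw [norm_mul, RCLike.norm_conj]
  nlinarith [sq_nonneg (‖f i‖ - ‖g i‖)]

lemma exists_apply_ne_zero {f : l2 I} (hf : f ≠ 0) : ∃ i, f i ≠ 0 := by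
  by_contra! h
  exact hf (lp.ext (funext h))

def ofFinite [Finite I] (f : I → ℂ) : l2 I := ⟨f, Memℓp.all f⟩

@[simp] lemma ofFinite_apply [Finite I] (f : I → ℂ) (i : I) : ofFinite f i = f i := rfl

def comp (f : l2 I) (e : J → I) (he : Function.Injective e) : l2 J :=
  ⟨f ∘ e, memℓp_of_summable_norm_sq ((summable_norm_sq f).comp_injective he)⟩

def slice (ξ : l2 (U × V)) (u : U) : l2 V := comp ξ (Prod.mk u) (Prod.mk_right_injective u)

@[simp] lemma slice_apply (ξ : l2 (U × V)) (u : U) (v : V) : slice ξ u v = ξ (u, v) := rfl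

def swap (ξ : l2 (U × V)) : l2 (V × U) := comp ξ Prod.swap Prod.swap_injective

@[simp] lemma swap_apply (ξ : l2 (U × V)) (p : V × U) : swap ξ p = ξ p.swap := rfl

def tprod (f : l2 I) (g : l2 J) : l2 (I × J) :=
  ⟨fun p => f p.1 * g p.2, memℓp_of_summable_norm_sq <| by
    simpa [mul_pow] using (summable_norm_sq f).mul_of_nonneg (summable_norm_sq g)
      (fun _ => by positivity) (fun _ => by positivity)⟩

@[simp] lemma tprod_apply (f : l2 I) (g : l2 J) (p : I × J) : tprod f g p = f p.1 * g p.2 := rfl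

lemma inner_tprod_tprod (f f' : l2 I) (g g' : l2 J) :
    ⟪tprod f g, tprod f' g'⟫_ℂ = ⟪f, f'⟫_ℂ * ⟪g, g'⟫_ℂ := by
  rw [inner_eq_tsum, inner_eq_tsum, inner_eq_tsum,
    tsum_mul_tsum_of_summable_norm (summable_norm_conj_mul f f') (summable_norm_conj_mul g g')]
  exact tsum_congr fun p => by simp only [tprod_apply, map_mul]; ring

def bipartiteTensor (ξ : l2 (U × V)) (η : l2 (U' × V')) : l2 ((U × U') × (V × V')) :=
  comp (tprod ξ η) (Equiv.prodProdProdComm U U' V V') (Equiv.injective _)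

@[simp] lemma bipartiteTensor_apply (ξ : l2 (U × V)) (η : l2 (U' × V')) (u : U) (u' : U')
    (v : V) (v' : V') : bipartiteTensor ξ η ((u, u'), (v, v')) = ξ (u, v) * η (u', v') := rfl

lemma slice_bipartiteTensor (ξ : l2 (U × V)) (η : l2 (U' × V')) (p : U × U') :
    slice (bipartiteTensor ξ η) p = tprod (slice ξ p.1) (slice η p.2) := rfl

lemma tprod_ne_zero {f : l2 I} {g : l2 J} (hf : f ≠ 0) (hg : g ≠ 0) : tprod f g ≠ 0 := by
  obtain ⟨i, hi⟩ := exists_apply_ne_zero hf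
  obtain ⟨j, hj⟩ := exists_apply_ne_zero hg
  intro h
  exact mul_ne_zero hi hj (by simpa using congr($h (i, j)))

lemma bipartiteTensor_ne_zero {ξ : l2 (U × V)} {η : l2 (U' × V')} (hξ : ξ ≠ 0) (hη : η ≠ 0) :
    bipartiteTensor ξ η ≠ 0 := by
  obtain ⟨⟨u, v⟩, huv⟩ := exists_apply_ne_zero hξ
  obtain ⟨⟨u', v'⟩, huv'⟩ := exists_apply_ne_zero hη
  intro h
  exact mul_ne_zero huv huv' (by simpa using congr($h ((u, u'), (v, v'))))

lemma summable_norm_sq_slice (ξ : l2 (U × V)) : Summable fun u => ‖slice ξ u‖ ^ 2 := by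
  simp only [norm_sq_eq_tsum, slice_apply]
  exact ((summable_prod_of_nonneg fun _ => by positivity).1 (summable_norm_sq ξ)).2

/-- `Tr ρ²` for the reduced operator `ρ = Tr_V |ξ⟩⟨ξ|` on `ℓ²(U)`. -/
noncomputable def purity (ξ : l2 (U × V)) : ℝ :=
  ∑' p : U × U, ‖⟪slice ξ p.1, slice ξ p.2⟫_ℂ‖ ^ 2

lemma summable_purity (ξ : l2 (U × V)) :
    Summable fun p : U × U => ‖⟪slice ξ p.1, slice ξ p.2⟫_ℂ‖ ^ 2 := by
  have h := summable_norm_sq_slice ξ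
  refine .of_nonneg_of_le (fun _ => by positivity) (fun p => ?_)
    (h.mul_of_nonneg h (fun _ => by positivity) (fun _ => by positivity))
  rw [← mul_pow]
  gcongr
  exact norm_inner_le_norm _ _

lemma purity_pos {ξ : l2 (U × V)} (hξ : ξ ≠ 0) : 0 < purity ξ := by
  obtain ⟨⟨u, v⟩, huv⟩ := exists_apply_ne_zero hξ
  have hu : slice ξ u ≠ 0 := fun h => huv (by simpa using congr($h v))
  calc 0 < ‖⟪slice ξ u, slice ξ u⟫_ℂ‖ ^ 2 := by
        simpa using pow_pos (pow_pos (norm_pos_iff.2 hu) 2) 2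
    _ ≤ purity ξ := (summable_purity ξ).le_tsum (u, u) fun _ _ => by positivity

lemma purity_bipartiteTensor (ξ : l2 (U × V)) (η : l2 (U' × V')) :
    purity (bipartiteTensor ξ η) = purity ξ * purity η := by
  have hξ := summable_purity ξ
  have hη := summable_purity η
  rw [purity, purity, purity, hξ.tsum_mul_tsum hη
    (hξ.mul_of_nonneg hη (fun _ => by positivity) (fun _ => by positivity)),
    ← (Equiv.prodProdProdComm U U' U U').tsum_eq]
  exact tsum_congr fun p => by
    simp [slice_bipartiteTensor, inner_tprod_tprod, mul_pow]

lemma purity_eq_sum [Fintype U] [Fintype V] (ξ : l2 (U × V)) :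
    purity ξ = ∑ u, ∑ u', ‖∑ v, conj (ξ (u, v)) * ξ (u', v)‖ ^ 2 := by
  simp [purity, inner_eq_tsum, tsum_fintype, Fintype.sum_prod_type]

/-- Summing over `(v, v')` first gives `purity ξ`, summing over `(u, u')` first gives
`purity (swap ξ)`. -/
def quartet (ξ : l2 (U × V)) (q : (U × U) × (V × V)) : ℂ :=
  ξ (q.1.1, q.2.1) * conj (ξ (q.1.2, q.2.1)) * (conj (ξ (q.1.1, q.2.2)) * ξ (q.1.2, q.2.2))

lemma summable_quartet (ξ : l2 (U × V)) : Summable (quartet ξ) := by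
  let e := Equiv.prodProdProdComm U U V V
  let σ := (Equiv.prodComm U U).prodCongr (Equiv.refl (V × V))
  have hsq : Summable fun q => ‖ξ (e q).1‖ ^ 2 * ‖ξ (e q).2‖ ^ 2 :=
    e.summable_iff.2 <| (summable_norm_sq ξ).mul_of_nonneg (summable_norm_sq ξ)
      (fun _ => by positivity) (fun _ => by positivity)
  refine Summable.of_norm <| .of_nonneg_of_le (fun _ => by positivity) (fun q => ?_)
    ((hsq.add (σ.summable_iff.2 hsq)).div_const 2)
  obtain ⟨⟨u, u'⟩, v, v'⟩ := q
  simp only [quartet, norm_mul, RCLike.norm_conj, Equiv.prodProdProdComm_apply, e, σ,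
    Equiv.prodCongr_apply, Equiv.coe_prodComm, Equiv.coe_refl, Function.comp_apply, Prod.map_apply,
    Prod.swap_prod_mk, id_eq]
  nlinarith [sq_nonneg (‖ξ (u, v)‖ * ‖ξ (u', v')‖ - ‖ξ (u', v)‖ * ‖ξ (u, v')‖)]

lemma ofReal_norm_inner_slice_sq (ξ : l2 (U × V)) (u u' : U) :
    ((‖⟪slice ξ u, slice ξ u'⟫_ℂ‖ ^ 2 : ℝ) : ℂ) = ∑' z : V × V, quartet ξ ((u, u'), z) := by
  have hconj : conj ⟪slice ξ u, slice ξ u'⟫_ℂ = ∑' v, ξ (u, v) * conj (ξ (u', v)) := by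
    rw [inner_eq_tsum, Complex.conj_tsum]
    exact tsum_congr fun v => by simp
  rw [Complex.ofReal_pow, ← Complex.conj_mul', hconj, inner_eq_tsum,
    tsum_mul_tsum_of_summable_norm _ (summable_norm_conj_mul _ _)]
  · rfl
  · simpa [norm_mul] using summable_norm_conj_mul (slice ξ u) (slice ξ u')

lemma ofReal_purity (ξ : l2 (U × V)) : (purity ξ : ℂ) = ∑' q, quartet ξ q := by
  have h := summable_quartet ξ
  rw [purity, Complex.ofReal_tsum, h.tsum_prod' fun p => h.prod_factor p]
  exact tsum_congr fun p => ofReal_norm_inner_slice_sq ξ p.1 p.2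

lemma purity_swap (ξ : l2 (U × V)) : purity (swap ξ) = purity ξ := by
  refine Complex.ofReal_injective ?_
  rw [ofReal_purity, ofReal_purity, ← (Equiv.prodComm _ _).tsum_eq]
  refine tsum_congr fun q => ?_
  simp only [quartet, swap_apply, Equiv.prodComm_apply, Prod.swap]
  ring

end l2

section Amplification

open l2

variable {X Y : Type*}

lemma IsAmplificationFst.add {T T' : l2 X →L[ℂ] l2 X} {W W' : l2 (X × Y) →L[ℂ] l2 (X × Y)}
    (h : IsAmplificationFst T W) (h' : IsAmplificationFst T' W') :
    IsAmplificationFst (T + T') (W + W') := fun f g y hg x => by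
  simp [h f g y hg x, h' f g y hg x]

lemma IsAmplificationFst.sub {T T' : l2 X →L[ℂ] l2 X} {W W' : l2 (X × Y) →L[ℂ] l2 (X × Y)}
    (h : IsAmplificationFst T W) (h' : IsAmplificationFst T' W') :
    IsAmplificationFst (T - T') (W - W') := fun f g y hg x => by
  simp [h f g y hg x, h' f g y hg x]

lemma IsAmplificationSnd.add {T T' : l2 Y →L[ℂ] l2 Y} {W W' : l2 (X × Y) →L[ℂ] l2 (X × Y)}
    (h : IsAmplificationSnd T W) (h' : IsAmplificationSnd T' W') :
    IsAmplificationSnd (T + T') (W + W') := fun f g x hg y => by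
  simp [h f g x hg y, h' f g x hg y]

lemma IsAmplificationSnd.sub {T T' : l2 Y →L[ℂ] l2 Y} {W W' : l2 (X × Y) →L[ℂ] l2 (X × Y)}
    (h : IsAmplificationSnd T W) (h' : IsAmplificationSnd T' W') :
    IsAmplificationSnd (T - T') (W - W') := fun f g x hg y => by
  simp [h f g x hg y, h' f g x hg y]

lemma IsAmplificationFst.slice_swap_map {T : l2 X →L[ℂ] l2 X} {W : l2 (X × Y) →L[ℂ] l2 (X × Y)}
    (h : IsAmplificationFst T W) (ξ : l2 (X × Y)) (y : Y) :
    slice (swap (W ξ)) y = T (slice (swap ξ) y) :=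
  lp.ext (funext fun x => h ξ _ y (fun _ => rfl) x)

lemma IsAmplificationSnd.slice_map {T : l2 Y →L[ℂ] l2 Y} {W : l2 (X × Y) →L[ℂ] l2 (X × Y)}
    (h : IsAmplificationSnd T W) (ξ : l2 (X × Y)) (x : X) :
    slice (W ξ) x = T (slice ξ x) :=
  lp.ext (funext fun y => h ξ _ x (fun _ => rfl) y)

lemma IsAmplificationFst.eq_one {W : l2 (X × Y) →L[ℂ] l2 (X × Y)}
    (h : IsAmplificationFst (1 : l2 X →L[ℂ] l2 X) W) : W = 1 := by
  ext1 ξ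
  refine lp.ext (funext fun ⟨x, y⟩ => ?_)
  simpa using congr($(h.slice_swap_map ξ y) x)

lemma IsAmplificationSnd.eq_one {W : l2 (X × Y) →L[ℂ] l2 (X × Y)}
    (h : IsAmplificationSnd (1 : l2 Y →L[ℂ] l2 Y) W) : W = 1 := by
  ext1 ξ
  refine lp.ext (funext fun ⟨x, y⟩ => ?_)
  simpa using congr($(h.slice_map ξ x) y)

lemma IsAmplificationFst.purity_swap_map {T : l2 X →L[ℂ] l2 X} {W : l2 (X × Y) →L[ℂ] l2 (X × Y)}
    (h : IsAmplificationFst T W) (hT : T ∈ unitary (l2 X →L[ℂ] l2 X)) (ξ : l2 (X × Y)) :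
    purity (swap (W ξ)) = purity (swap ξ) :=
  tsum_congr fun p => by
    rw [h.slice_swap_map, h.slice_swap_map, T.inner_map_map_of_mem_unitary hT]

lemma IsAmplificationSnd.purity_map {T : l2 Y →L[ℂ] l2 Y} {W : l2 (X × Y) →L[ℂ] l2 (X × Y)}
    (h : IsAmplificationSnd T W) (hT : T ∈ unitary (l2 Y →L[ℂ] l2 Y)) (ξ : l2 (X × Y)) :
    purity (W ξ) = purity ξ :=
  tsum_congr fun p => by rw [h.slice_map, h.slice_map, T.inner_map_map_of_mem_unitary hT]

lemma purity_map_map_of_isAmplification {A : l2 X →L[ℂ] l2 X} {B : l2 Y →L[ℂ] l2 Y}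
    {WA WB : l2 (X × Y) →L[ℂ] l2 (X × Y)} (hWA : IsAmplificationFst A WA)
    (hA : A ∈ unitary (l2 X →L[ℂ] l2 X)) (hWB : IsAmplificationSnd B WB)
    (hB : B ∈ unitary (l2 Y →L[ℂ] l2 Y)) (ξ : l2 (X × Y)) :
    purity (WA (WB ξ)) = purity ξ := by
  rw [← purity_swap, hWA.purity_swap_map hA, purity_swap, hWB.purity_map hB]

end Amplification

lemma IsStarProjection.sub_mem_unitary_of_add_eq_one {R : Type*} [Ring R] [StarRing R] {p q : R}
    (hp : IsStarProjection p) (hpq : p + q = 1) : p - q ∈ unitary R := by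
  convert hp.two_mul_sub_one_mem_unitary using 1
  rw [← hpq]
  noncomm_ring

lemma sub_smul_sub_smul_eq_self {R M : Type*} [Ring R] [AddCommGroup M] [Module R M]
    {p₀ p₁ q₀ q₁ : R} (hp : p₀ + p₁ = 1) (hq : q₀ + q₁ = 1) {x : M} (h₀₁ : p₀ • q₁ • x = 0)
    (h₁₀ : p₁ • q₀ • x = 0) : (p₀ - p₁) • (q₀ - q₁) • x = x := by
  calc (p₀ - p₁) • (q₀ - q₁) • x = p₀ • q₀ • x + p₁ • q₁ • x := by
        simp only [sub_smul, smul_sub, h₀₁, h₁₀]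
        abel
    _ = (p₀ + p₁) • (q₀ + q₁) • x := by
        simp only [add_smul, smul_add, h₀₁, h₁₀]
        abel
    _ = x := by rw [hp, hq, one_smul, one_smul]

lemma sub_smul_sub_smul_add_eq_sub {R M : Type*} [Ring R] [AddCommGroup M] [Module R M]
    {p q : Fin 2 → R} (hp : p 0 + p 1 = 1) (hq : q 0 + q 1 = 1) {x : Fin 2 → M}
    (h : ∀ c a b : Fin 2, a + b ≠ c → p a • q b • x c = 0) :
    (p 0 - p 1) • (q 0 - q 1) • (x 0 + x 1) = x 0 - x 1 := by
  have h₀ := sub_smul_sub_smul_eq_self hp hq (h 0 0 1 (by decide)) (h 0 1 0 (by decide))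
  have h₁ := sub_smul_sub_smul_eq_self hp ((add_comm _ _).trans hq)
    (h 1 0 0 (by decide)) (h 1 1 1 (by decide))
  rw [smul_add, smul_add, h₀, ← neg_sub (q 1), neg_smul, smul_neg, h₁, sub_eq_add_neg]

open l2

lemma purity_gameCoeff_add :
    purity (ofFinite fun p : Fin 3 × Fin 3 => gameCoeff 0 p.1 p.2 + gameCoeff 1 p.1 p.2) = 4 := by
  have hsqrt : (Real.sqrt 2 : ℂ)⁻¹ + (Real.sqrt 2 : ℂ)⁻¹ = Real.sqrt 2 := by
    have : (Real.sqrt 2 : ℂ) ≠ 0 := by simp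
    field_simp
    norm_cast
    simp
  simp only [purity_eq_sum, ofFinite_apply, Fin.sum_univ_three, gameCoeff, Fin.isValue,
    Fin.reduceEq, and_true, and_false, if_true, if_false]
  norm_num [hsqrt]

lemma purity_gameCoeff_sub :
    purity (ofFinite fun p : Fin 3 × Fin 3 => gameCoeff 0 p.1 p.2 - gameCoeff 1 p.1 p.2) = 2 := by
  simp only [purity_eq_sum, ofFinite_apply, Fin.sum_univ_three, gameCoeff, Fin.isValue,
    Fin.reduceEq, and_true, and_false, if_true, if_false]
  norm_num [map_ofNat]

/-- There is no perfect strategy for the coherent embezzlement game in the tensor product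
framework, even with ancillas. -/
theorem no_perfect_coherent_embezzlement_tensor (R_A R_B G_A G_B : Type*) :
    ¬ ∃ (ψ : l2 (R_A × R_B)) (γA : l2 G_A) (γB : l2 G_B)
        (P : Fin 2 → (l2 (Fin 3 × R_A × G_A) →L[ℂ] l2 (Fin 3 × R_A × G_A)))
        (Q : Fin 2 → (l2 (Fin 3 × R_B × G_B) →L[ℂ] l2 (Fin 3 × R_B × G_B)))
        (Phat Qhat : Fin 2 → (l2 ((Fin 3 × R_A × G_A) × (Fin 3 × R_B × G_B))
          →L[ℂ] l2 ((Fin 3 × R_A × G_A) × (Fin 3 × R_B × G_B))))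
        (Φ : Fin 2 → l2 ((Fin 3 × R_A × G_A) × (Fin 3 × R_B × G_B))),
      ‖ψ‖ = 1 ∧ ‖γA‖ = 1 ∧ ‖γB‖ = 1 ∧
      (∀ a, IsSelfAdjoint (P a) ∧ (P a) ∘L (P a) = P a) ∧
      (∀ b, IsSelfAdjoint (Q b) ∧ (Q b) ∘L (Q b) = Q b) ∧
      P 0 + P 1 = 1 ∧ Q 0 + Q 1 = 1 ∧
      (∀ a, IsAmplificationFst (P a) (Phat a)) ∧
      (∀ b, IsAmplificationSnd (Q b) (Qhat b)) ∧
      (∀ (c : Fin 2) (i : Fin 3) (rA : R_A) (gA : G_A) (j : Fin 3) (rB : R_B) (gB : G_B),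
        (Φ c) ((i, rA, gA), (j, rB, gB))
          = gameCoeff c i j * ψ (rA, rB) * γA gA * γB gB) ∧
      (∀ c a b : Fin 2, a + b ≠ c → Phat a (Qhat b (Φ c)) = 0) := by
  rintro ⟨ψ, γA, γB, P, Q, Phat, Qhat, Φ, hψ, hγA, hγB, hP, hQ, hPsum, hQsum, hPamp, hQamp, hΦ,
    hwin⟩
  let η := bipartiteTensor ψ (tprod γA γB)
  have hη : η ≠ 0 := bipartiteTensor_ne_zero (ne_zero_of_norm_ne_zero (by simp [hψ]))
    (tprod_ne_zero (ne_zero_of_norm_ne_zero (by simp [hγA]))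
      (ne_zero_of_norm_ne_zero (by simp [hγB])))
  have hadd : Φ 0 + Φ 1 = bipartiteTensor
      (ofFinite fun p : Fin 3 × Fin 3 => gameCoeff 0 p.1 p.2 + gameCoeff 1 p.1 p.2) η := by
    ext ⟨⟨i, r, g⟩, j, s, h⟩
    simp only [AddSubgroup.coe_add, PreLp.add_apply, hΦ, bipartiteTensor_apply, ofFinite_apply,
      tprod_apply, η]
    ring
  have hsub : Φ 0 - Φ 1 = bipartiteTensor
      (ofFinite fun p : Fin 3 × Fin 3 => gameCoeff 0 p.1 p.2 - gameCoeff 1 p.1 p.2) η := by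
    ext ⟨⟨i, r, g⟩, j, s, h⟩
    simp only [AddSubgroup.coe_sub, PreLp.sub_apply, hΦ, bipartiteTensor_apply, ofFinite_apply,
      tprod_apply, η]
    ring
  have hPhat : Phat 0 + Phat 1 = 1 := (hPsum ▸ (hPamp 0).add (hPamp 1)).eq_one
  have hQhat : Qhat 0 + Qhat 1 = 1 := (hQsum ▸ (hQamp 0).add (hQamp 1)).eq_one
  have hswap : (Phat 0 - Phat 1) ((Qhat 0 - Qhat 1) (Φ 0 + Φ 1)) = Φ 0 - Φ 1 :=
    sub_smul_sub_smul_add_eq_sub hPhat hQhat hwin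
  have hpurity := purity_map_map_of_isAmplification ((hPamp 0).sub (hPamp 1))
    (IsStarProjection.sub_mem_unitary_of_add_eq_one ⟨(hP 0).2, (hP 0).1⟩ hPsum)
    ((hQamp 0).sub (hQamp 1))
    (IsStarProjection.sub_mem_unitary_of_add_eq_one ⟨(hQ 0).2, (hQ 0).1⟩ hQsum) (Φ 0 + Φ 1)
  rw [hswap, hadd, hsub, purity_bipartiteTensor _ η, purity_bipartiteTensor _ η,
    purity_gameCoeff_add, purity_gameCoeff_sub] at hpurity
  linarith [purity_pos hη]
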